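/- arXiv:2401.05829 — 2 statements merged into one kernel-verified Lean document; each statement's English description precedes it below -/
import Mathlib

section
/- Let n ≥ 2 and 0 < λ ≤ Λ, excluding the case n = 2 and λ = Λ, and set γ = 1 − (n−1)Λ/λ < 0. Then E⁻(x) = |x|^γ satisfies M⁻(D²E⁻(x), λ, Λ) = 0 for every x ∈ ℝⁿ \ {0}. -/
noncomputable def hessMat (n : ℕ) (u : EuclideanSpace ℝ (Fin n) → ℝ)
    (x : EuclideanSpace ℝ (Fin n)) : Matrix (Fin n) (Fin n) ℝ :=
  Matrix.of fun i j =>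
    fderiv ℝ (fun y => fderiv ℝ u y (EuclideanSpace.single j 1)) x (EuclideanSpace.single i 1)

/-- Pucci minimal operator. -/
noncomputable def pucciInf {n : ℕ} (l L : ℝ) (M : Matrix (Fin n) (Fin n) ℝ)
    (hM : M.IsHermitian) : ℝ :=
  ∑ i, (l * max (hM.eigenvalues i) 0 + L * min (hM.eigenvalues i) 0)

/-!
At `x ≠ 0` the Hessian of `‖x‖ ^ γ` is `γ ‖x‖ ^ (γ - 2) (I + (γ - 2) x̂ x̂ᵀ)`, a scalar matrix plus a
rank-one matrix. Its eigenvalues are `γ ‖x‖ ^ (γ - 2) < 0` on `x^⊥` (multiplicity `n - 1`) and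
`γ (γ - 1) ‖x‖ ^ (γ - 2) > 0` in the radial direction, so
`M⁻ = γ ‖x‖ ^ (γ - 2) ((n - 1) Λ + λ (γ - 1))`, which vanishes exactly for `γ = 1 - (n - 1) Λ / λ`.
Only the trace is needed to get the multiplicities: once every eigenvalue is one of two values,
the trace determines how often each occurs.
-/

open Matrix Finset

section NormRpow

variable {E : Type*} [NormedAddCommGroup E] [InnerProductSpace ℝ E]

theorem hasFDerivAt_norm_rpow_of_ne_zero (p : ℝ) {x : E} (hx : x ≠ 0) :
    HasFDerivAt (fun x : E ↦ ‖x‖ ^ p) ((p * ‖x‖ ^ (p - 2)) • innerSL ℝ x) x := by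
  apply HasStrictFDerivAt.hasFDerivAt
  convert! (hasStrictFDerivAt_norm_sq x).rpow_const (p := p / 2) (by simp [hx]) using 0
  simp_rw [← Real.rpow_natCast_mul (norm_nonneg _), ← Nat.cast_smul_eq_nsmul ℝ, smul_smul]
  ring_nf

theorem fderiv_norm_rpow_apply_of_ne_zero (p : ℝ) {x : E} (hx : x ≠ 0) (v : E) :
    fderiv ℝ (fun x : E ↦ ‖x‖ ^ p) x v = p * ‖x‖ ^ (p - 2) * inner ℝ x v := by
  simp [(hasFDerivAt_norm_rpow_of_ne_zero p hx).fderiv, mul_assoc]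

theorem fderiv_fderiv_norm_rpow_apply (p : ℝ) {x : E} (hx : x ≠ 0) (v w : E) :
    fderiv ℝ (fun y ↦ fderiv ℝ (fun x : E ↦ ‖x‖ ^ p) y v) x w =
      p * (p - 2) * ‖x‖ ^ (p - 4) * inner ℝ x w * inner ℝ x v +
        p * ‖x‖ ^ (p - 2) * inner ℝ w v := by
  have hfirst : (fun y ↦ fderiv ℝ (fun x : E ↦ ‖x‖ ^ p) y v) =ᶠ[nhds x]
      fun y ↦ p * (‖y‖ ^ (p - 2) * innerSL ℝ v y) := by
    filter_upwards [isOpen_compl_singleton.mem_nhds hx] with y hy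
    rw [fderiv_norm_rpow_apply_of_ne_zero p hy, innerSL_apply_apply, real_inner_comm, mul_assoc]
  have hsecond : HasFDerivAt (fun y ↦ p * (‖y‖ ^ (p - 2) * innerSL ℝ v y)) _ x :=
    ((hasFDerivAt_norm_rpow_of_ne_zero (p - 2) hx).mul (innerSL ℝ v).hasFDerivAt).const_mul p
  rw [hfirst.fderiv_eq, hsecond.fderiv]
  simp only [coe_innerSL_apply, smul_add, _root_.add_apply, _root_.smul_apply, smul_eq_mul,
    real_inner_comm v]
  ring_nf

end NormRpow

namespace Matrix

variable {ι : Type*} [DecidableEq ι]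

theorem isHermitian_smul_one_add_smul_vecMulVec_self (a b : ℝ) (v : ι → ℝ) :
    (a • (1 : Matrix ι ι ℝ) + b • vecMulVec v v).IsHermitian := by
  ext i j
  by_cases hij : i = j
  · subst hij; simp
  · simp [vecMulVec, hij, Ne.symm hij, mul_comm]

variable [Fintype ι]

theorem trace_smul_one_add_smul_vecMulVec_self (a b : ℝ) (v : ι → ℝ) :
    (a • (1 : Matrix ι ι ℝ) + b • vecMulVec v v).trace = Fintype.card ι * a + b * (v ⬝ᵥ v) := by
  simp [mul_comm]

theorem eq_or_eq_of_mulVec_eq_smul {a b μ : ℝ} {v w : ι → ℝ} (hw : w ≠ 0)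
    (h : (a • (1 : Matrix ι ι ℝ) + b • vecMulVec v v) *ᵥ w = μ • w) :
    μ = a ∨ μ = a + b * (v ⬝ᵥ v) := by
  have hexpand : (μ - a) • w = (b * (v ⬝ᵥ w)) • v := by
    rw [sub_smul, ← h, add_mulVec, smul_mulVec, smul_mulVec, one_mulVec, vecMulVec_mulVec]
    simp [smul_smul]
  by_cases hvw : v ⬝ᵥ w = 0
  · left
    rw [hvw, mul_zero, zero_smul, smul_eq_zero, sub_eq_zero] at hexpand
    exact hexpand.resolve_right hw
  · right
    have hdot := congrArg (v ⬝ᵥ ·) hexpand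
    simp only [dotProduct_smul, smul_eq_mul] at hdot
    have : μ - a = b * (v ⬝ᵥ v) := mul_right_cancel₀ hvw (by rw [hdot]; ring)
    linarith

theorem IsHermitian.eigenvalues_eq_or_eq_of_eq_smul_one_add_smul_vecMulVec_self
    {A : Matrix ι ι ℝ} (hA : A.IsHermitian) {a b : ℝ} {v : ι → ℝ}
    (hAv : A = a • 1 + b • vecMulVec v v) (i : ι) :
    hA.eigenvalues i = a ∨ hA.eigenvalues i = a + b * (v ⬝ᵥ v) := by
  subst hAv
  refine eq_or_eq_of_mulVec_eq_smul ?_ (hA.mulVec_eigenvectorBasis i)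
  exact (WithLp.ofLp_eq_zero 2).ne.2 (hA.eigenvectorBasis.orthonormal.ne_zero i)

theorem IsHermitian.sum_apply_eigenvalues_of_mem_pair {A : Matrix ι ι ℝ} (hA : A.IsHermitian)
    {a c : ℝ} (hac : a ≠ c) (heig : ∀ i, hA.eigenvalues i = a ∨ hA.eigenvalues i = c)
    (htr : A.trace = (Fintype.card ι - 1) * a + c) (f : ℝ → ℝ) :
    ∑ i, f (hA.eigenvalues i) = (Fintype.card ι - 1) * f a + f c := by
  have hca : c - a ≠ 0 := sub_ne_zero.2 hac.symm
  set s := (f c - f a) / (c - a)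
  have hs : (c - a) * s = f c - f a := mul_div_cancel₀ _ hca
  -- `f` agrees on `{a, c}` with the affine function through `(a, f a)` and `(c, f c)`.
  have hlin : ∀ i, f (hA.eigenvalues i) = f a + (hA.eigenvalues i - a) * s := by
    intro i
    rcases heig i with h | h <;> rw [h]
    · ring
    · linear_combination -hs
  have hsum : ∑ i, hA.eigenvalues i = (Fintype.card ι - 1) * a + c := by
    rw [← htr, hA.trace_eq_sum_eigenvalues]
    simp
  calc ∑ i, f (hA.eigenvalues i)
      = Fintype.card ι * f a + (∑ i, hA.eigenvalues i - Fintype.card ι * a) * s := by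
        simp [hlin, sum_add_distrib, ← sum_mul, sum_sub_distrib]
    _ = (Fintype.card ι - 1) * f a + f c := by
        rw [hsum]; linear_combination hs

theorem IsHermitian.sum_apply_eigenvalues_of_eq_smul_one_add_smul_vecMulVec_self
    {A : Matrix ι ι ℝ} (hA : A.IsHermitian) {a b : ℝ} {v : ι → ℝ}
    (hAv : A = a • 1 + b • vecMulVec v v) (hb : b * (v ⬝ᵥ v) ≠ 0) (f : ℝ → ℝ) :
    ∑ i, f (hA.eigenvalues i) = (Fintype.card ι - 1) * f a + f (a + b * (v ⬝ᵥ v)) := by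
  refine hA.sum_apply_eigenvalues_of_mem_pair (by simpa using hb)
    (hA.eigenvalues_eq_or_eq_of_eq_smul_one_add_smul_vecMulVec_self hAv) ?_ f
  rw [hAv, trace_smul_one_add_smul_vecMulVec_self]
  ring

end Matrix

theorem EuclideanSpace.dotProduct_ofLp_self {n : ℕ} (x : EuclideanSpace ℝ (Fin n)) :
    x.ofLp ⬝ᵥ x.ofLp = ‖x‖ ^ 2 := by
  rw [EuclideanSpace.real_norm_sq_eq, dotProduct]
  simp [sq]

theorem hessMat_norm_rpow {n : ℕ} (γ : ℝ) {x : EuclideanSpace ℝ (Fin n)} (hx : x ≠ 0) :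
    hessMat n (fun y ↦ ‖y‖ ^ γ) x =
      (γ * ‖x‖ ^ (γ - 2)) • 1 + (γ * (γ - 2) * ‖x‖ ^ (γ - 4)) • vecMulVec x.ofLp x.ofLp := by
  ext i j
  rw [hessMat, of_apply, fderiv_fderiv_norm_rpow_apply γ hx]
  simp only [EuclideanSpace.inner_single_right, PiLp.single_apply, Matrix.add_apply,
    Matrix.smul_apply, one_apply, vecMulVec_apply, smul_eq_mul, eq_comm (a := j), conj_trivial]
  split_ifs <;> ring

theorem one_sub_mul_div_neg {n : ℕ} (hn : 2 ≤ n) {l L : ℝ} (hl : 0 < l) (hlL : l ≤ L)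
    (hexc : ¬(n = 2 ∧ l = L)) : 1 - (n - 1) * L / l < 0 := by
  rw [sub_neg, one_lt_div hl]
  rcases hn.lt_or_eq with hn3 | rfl
  · have : (3 : ℝ) ≤ n := by exact_mod_cast hn3
    nlinarith
  · have : l < L := hlL.lt_of_ne fun h ↦ hexc ⟨rfl, h⟩
    norm_num
    linarith

theorem pucciInf_hessMat_norm_rpow {n : ℕ} (l L : ℝ) {γ : ℝ} (hγ : γ < 0)
    {x : EuclideanSpace ℝ (Fin n)} (hx : x ≠ 0) :
    ∃ h : (hessMat n (fun y ↦ ‖y‖ ^ γ) x).IsHermitian,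
      pucciInf l L (hessMat n (fun y ↦ ‖y‖ ^ γ) x) h =
        γ * ‖x‖ ^ (γ - 2) * ((n - 1) * L + l * (γ - 1)) := by
  have hx' : 0 < ‖x‖ := norm_pos_iff.2 hx
  have hb : γ * (γ - 2) * ‖x‖ ^ (γ - 4) * (x.ofLp ⬝ᵥ x.ofLp) ≠ 0 := by
    rw [EuclideanSpace.dotProduct_ofLp_self]
    exact mul_ne_zero (mul_ne_zero (mul_ne_zero hγ.ne (by linarith))
      (Real.rpow_pos_of_pos hx' _).ne') (by positivity)
  have hradial : γ * ‖x‖ ^ (γ - 2) + γ * (γ - 2) * ‖x‖ ^ (γ - 4) * (x.ofLp ⬝ᵥ x.ofLp) =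
      γ * (γ - 1) * ‖x‖ ^ (γ - 2) := by
    rw [EuclideanSpace.dotProduct_ofLp_self, ← Real.rpow_natCast, mul_assoc _ (‖x‖ ^ _),
      ← Real.rpow_add hx']
    ring_nf
  have hr : 0 < ‖x‖ ^ (γ - 2) := Real.rpow_pos_of_pos hx' _
  have htangential_neg : γ * ‖x‖ ^ (γ - 2) < 0 := mul_neg_of_neg_of_pos hγ hr
  have hradial_pos : 0 < γ * (γ - 1) * ‖x‖ ^ (γ - 2) :=
    mul_pos (mul_pos_of_neg_of_neg hγ (by linarith)) hr
  rw [hessMat_norm_rpow γ hx]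
  refine ⟨isHermitian_smul_one_add_smul_vecMulVec_self _ _ _, ?_⟩
  rw [pucciInf, IsHermitian.sum_apply_eigenvalues_of_eq_smul_one_add_smul_vecMulVec_self _
    rfl hb (fun μ ↦ l * max μ 0 + L * min μ 0), hradial, Fintype.card_fin,
    max_eq_right htangential_neg.le, min_eq_left htangential_neg.le,
    max_eq_left hradial_pos.le, min_eq_right hradial_pos.le]
  ring

/-- excluding the case `n = 2, λ = Λ`, with `γ = 1 − (n−1)Λ/λ < 0`, the
function `E⁻(x) = |x|^γ` satisfies `M⁻(D²E⁻(x), λ, Λ) = 0` for every `x ≠ 0`. -/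
theorem stmt5 (n : ℕ) (hn : 2 ≤ n) (l L : ℝ) (hl : 0 < l) (hlL : l ≤ L)
    (hexc : ¬(n = 2 ∧ l = L)) (γ : ℝ) (hγ : γ = 1 - (n - 1) * L / l) :
    γ < 0 ∧
    ∀ x : EuclideanSpace ℝ (Fin n), x ≠ 0 →
      ∃ h : (hessMat n (fun y => ‖y‖ ^ γ) x).IsHermitian,
        pucciInf l L (hessMat n (fun y => ‖y‖ ^ γ) x) h = 0 := by
  have hγ_neg : γ < 0 := hγ ▸ one_sub_mul_div_neg hn hl hlL hexc
  refine ⟨hγ_neg, fun x hx ↦ ?_⟩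
  obtain ⟨h, hpucci⟩ := pucciInf_hessMat_norm_rpow l L hγ_neg hx
  refine ⟨h, hpucci.trans ?_⟩
  rw [hγ]
  field_simp
  ring
end

section
/- Let n ≥ 3 and let u, v be harmonic on ℝⁿ \ B̄₁ and continuous on ℝⁿ \ B₁, with u(x) → +∞ and v(x) → +∞ as |x| → ∞, and suppose u(x)/v(x) → a ∈ (0, ∞) as |x| → ∞. Then a·v(x) − a·max_{∂B₁} v + min_{∂B₁} u ≤ u(x) ≤ a·v(x) − a·min_{∂B₁} v + max_{∂B₁} u for all |x| ≥ 1; in particular there is a constant C with |u(x) − a·v(x)| ≤ C on ℝⁿ \ B₁. -/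
/-!
At an interior minimum of a `C²` function the Laplacian is nonnegative, so for `f`
harmonic and `δ > 0` the strictly superharmonic function `f - δ‖x‖²` attains its minimum over
a compact closure on the frontier; letting `δ → 0` gives the weak minimum principle on
bounded sets.

For `b > a` the harmonic function `b v - u` tends to `+∞`, so the minimum principle on the
annuli `1 < ‖x‖ < R`, with `R` large, bounds it from below by its minimum over the unit
sphere. Letting `b ↓ a` gives the upper bound for `u`; since `v / u → a⁻¹`, exchanging `u`
and `v` gives the lower bound.
-/

noncomputable def lap (n : ℕ) (u : EuclideanSpace ℝ (Fin n) → ℝ)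
    (x : EuclideanSpace ℝ (Fin n)) : ℝ :=
  ∑ i, fderiv ℝ (fun y => fderiv ℝ u y (EuclideanSpace.single i 1)) x
    (EuclideanSpace.single i 1)

open Filter Topology Set Laplacian InnerProductSpace

theorem IsLocalMin.deriv_deriv_nonneg {f : ℝ → ℝ} {x₀ : ℝ} (h : IsLocalMin f x₀)
    (hc : ContinuousAt f x₀) : 0 ≤ deriv (deriv f) x₀ := by
  by_contra! hneg
  have hmax : IsLocalMax f x₀ := isLocalMax_of_deriv_deriv_neg hneg h.deriv_eq_zero hc
  have hconst : f =ᶠ[𝓝 x₀] fun _ => f x₀ := by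
    filter_upwards [h, hmax] with x hmin hmax using le_antisymm hmax hmin
  exact hneg.ne (by simp [hconst.deriv.deriv_eq])

theorem IsLocalMin.iteratedFDeriv_two_nonneg {E : Type*} [NormedAddCommGroup E]
    [NormedSpace ℝ E] {f : E → ℝ} {x : E} (h : IsLocalMin f x) (hf : ContDiffAt ℝ 2 f x)
    (e : E) : 0 ≤ iteratedFDeriv ℝ 2 f x ![e, e] := by
  set L : ℝ → E := fun t => x + t • e
  have hL0 : L 0 = x := by simp [L]
  have hL (t : ℝ) : HasDerivAt L e t := by
    simpa [L] using ((hasDerivAt_id t).smul_const e).const_add x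
  have hLx : Tendsto L (𝓝 0) (𝓝 x) := hL0 ▸ (hL 0).continuousAt.tendsto
  have hderiv : deriv (f ∘ L) =ᶠ[𝓝 0] fun t => fderiv ℝ f (L t) e := by
    filter_upwards [hLx.eventually (hf.eventually (by simp))] with t ht
    exact ((ht.differentiableAt two_ne_zero).hasFDerivAt.comp_hasDerivAt t (hL t)).deriv
  have hsecond :
      HasDerivAt (fun t => fderiv ℝ f (L t) e) (fderiv ℝ (fderiv ℝ f) x e e) 0 := by
    have hdf : HasFDerivAt (fderiv ℝ f) (fderiv ℝ (fderiv ℝ f) x) (L 0) :=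
      hL0 ▸ ((hf.fderiv_right (m := 1) le_rfl).differentiableAt one_ne_zero).hasFDerivAt
    simpa [hL0] using (hdf.comp_hasDerivAt 0 (hL 0)).clm_apply (hasDerivAt_const 0 e)
  have hmin : IsLocalMin (f ∘ L) 0 := (hL0 ▸ h).comp_continuous (hL 0).continuousAt
  have hcont : ContinuousAt (f ∘ L) 0 := hf.continuousAt.comp_of_eq (hL 0).continuousAt hL0
  simp only [iteratedFDeriv_two_apply, Matrix.cons_val_zero, Matrix.cons_val_one]
  rw [← hsecond.deriv, ← hderiv.deriv_eq]
  exact hmin.deriv_deriv_nonneg hcont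

theorem tendsto_mul_sub_atTop_of_tendsto_div {α : Type*} {l : Filter α} {u v : α → ℝ}
    {a b : ℝ} (hv : Tendsto v l atTop) (h : Tendsto (fun x => u x / v x) l (𝓝 a))
    (hab : a < b) :
    Tendsto (fun x => b * v x - u x) l atTop := by
  refine (hv.atTop_mul_pos (sub_pos.2 hab) (tendsto_const_nhds.sub h)).congr' ?_
  filter_upwards [hv.eventually_gt_atTop 0] with x hx
  field_simp

theorem csInf_le_and_le_csSup_of_norm_eq {E : Type*} [NormedAddCommGroup E] [ProperSpace E]
    {f : E → ℝ} {r : ℝ} (hf : ContinuousOn f (Metric.sphere 0 r)) {y : E} (hy : ‖y‖ = r) :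
    sInf {t | ∃ y : E, ‖y‖ = r ∧ t = f y} ≤ f y ∧
      f y ≤ sSup {t | ∃ y : E, ‖y‖ = r ∧ t = f y} := by
  have hK : IsCompact {t | ∃ y : E, ‖y‖ = r ∧ t = f y} := by
    convert (isCompact_sphere (0 : E) r).image_of_continuousOn hf using 1
    ext t
    simp [eq_comm]
  have hy' : f y ∈ {t | ∃ y : E, ‖y‖ = r ∧ t = f y} := ⟨y, hy, rfl⟩
  exact ⟨csInf_le hK.bddBelow hy', le_csSup hK.bddAbove hy'⟩

namespace InnerProductSpace

variable {E : Type*} [NormedAddCommGroup E] [InnerProductSpace ℝ E] [FiniteDimensional ℝ E]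

theorem _root_.IsLocalMin.laplacian_nonneg {f : E → ℝ} {x : E} (h : IsLocalMin f x)
    (hf : ContDiffAt ℝ 2 f x) : 0 ≤ Δ f x := by
  rw [laplacian_eq_iteratedFDeriv_stdOrthonormalBasis]
  exact Finset.sum_nonneg fun i _ => h.iteratedFDeriv_two_nonneg hf _

theorem laplacian_norm_sq (x : E) :
    Δ (fun y : E => ‖y‖ ^ 2) x = 2 * Module.finrank ℝ E := by
  have hsecond (y : E) :
      fderiv ℝ (fderiv ℝ fun y : E => ‖y‖ ^ 2) x y y = 2 * ‖y‖ ^ 2 := by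
    rw [fderiv_norm_sq, fderiv_const_smul (innerSL ℝ).differentiableAt,
      ContinuousLinearMap.fderiv]
    simp only [FunLike.coe_smul, Pi.smul_apply, nsmul_eq_mul, Nat.cast_ofNat]
    rw [innerSL_apply_apply, real_inner_self_eq_norm_sq]
  rw [laplacian_eq_iteratedFDeriv_stdOrthonormalBasis]
  simp [iteratedFDeriv_two_apply, hsecond, mul_comm]

theorem HarmonicAt.not_isLocalMin_sub_mul_norm_sq [Nontrivial E] {f : E → ℝ} {x : E}
    (hf : HarmonicAt f x) {δ : ℝ} (hδ : 0 < δ) :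
    ¬ IsLocalMin (fun y => f y - δ * ‖y‖ ^ 2) x := by
  intro hmin
  set q : E → ℝ := fun y => ‖y‖ ^ 2
  have hq : ContDiffAt ℝ 2 q x := (contDiff_norm_sq ℝ).contDiffAt
  have hδq : ContDiffAt ℝ 2 (δ • q) x := hq.const_smul δ
  have hlap : Δ (f - δ • q) x = -(2 * δ * Module.finrank ℝ E) := by
    rw [hf.1.laplacian_sub hδq, laplacian_smul _ hq, laplacian_norm_sq, hf.2.eq_of_nhds]
    simp only [Pi.zero_apply, smul_eq_mul]
    ring
  have hpos : 0 ≤ Δ (f - δ • q) x := hmin.laplacian_nonneg (hf.1.sub hδq)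
  have : (0 : ℝ) < Module.finrank ℝ E := by exact_mod_cast Module.finrank_pos
  nlinarith

theorem HarmonicOnNhd.le_of_le_on_frontier [Nontrivial E] {f : E → ℝ} {U : Set E}
    (hU : Bornology.IsBounded U) (hf : HarmonicOnNhd f U)
    (hfc : ContinuousOn f (closure U)) {c : ℝ} (hc : ∀ y ∈ frontier U, c ≤ f y) {x : E}
    (hx : x ∈ closure U) : c ≤ f x := by
  obtain ⟨R, hR⟩ := hU.closure.exists_norm_le
  refine le_of_forall_pos_le_add fun ε hε => ?_
  set δ := ε / (R ^ 2 + 1)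
  have hδ : 0 < δ := by positivity
  set g : E → ℝ := fun y => f y - δ * ‖y‖ ^ 2
  obtain ⟨z, hzU, hzmin⟩ := hU.isCompact_closure.exists_isMinOn ⟨x, hx⟩
    (hfc.sub (by fun_prop) : ContinuousOn g (closure U))
  have hz : z ∈ frontier U := by
    by_contra hz
    have hzi : z ∈ interior U := closure_sdiff_frontier U ▸ ⟨hzU, hz⟩
    exact (hf z (interior_subset hzi)).not_isLocalMin_sub_mul_norm_sq hδ
      (hzmin.isLocalMin (mem_of_superset (mem_interior_iff_mem_nhds.1 hzi) subset_closure))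
  have hδR : δ * ‖z‖ ^ 2 ≤ ε := by
    have : ‖z‖ ^ 2 ≤ R ^ 2 + 1 := by nlinarith [hR z hzU, norm_nonneg z]
    calc δ * ‖z‖ ^ 2 ≤ δ * (R ^ 2 + 1) := by gcongr
      _ = ε := div_mul_cancel₀ _ (by positivity)
  calc c ≤ f z := hc z hz
    _ ≤ g z + ε := by simp only [g]; linarith
    _ ≤ g x + ε := by gcongr; exact hzmin hx
    _ ≤ f x + ε := by simp only [g]; nlinarith [sq_nonneg ‖x‖]

theorem HarmonicOnNhd.le_of_le_on_sphere_of_eventually_le [Nontrivial E] {w : E → ℝ}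
    {r c : ℝ} (hw : HarmonicOnNhd w {x | r < ‖x‖}) (hwc : ContinuousOn w {x | r ≤ ‖x‖})
    (hsphere : ∀ y : E, ‖y‖ = r → c ≤ w y) (hfar : ∀ᶠ y in comap (‖·‖) atTop, c ≤ w y)
    {x : E} (hx : r ≤ ‖x‖) : c ≤ w x := by
  rcases hx.eq_or_lt with hx | hx
  · exact hsphere x hx.symm
  obtain ⟨M, hM⟩ := eventually_atTop.1 (eventually_comap.1 hfar)
  set R := max M (‖x‖ + 1)
  set U : Set E := {y | r < ‖y‖ ∧ ‖y‖ < R}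
  have hUopen : IsOpen U :=
    (isOpen_lt continuous_const continuous_norm).inter (isOpen_lt continuous_norm continuous_const)
  have hclosure : closure U ⊆ {y | r ≤ ‖y‖ ∧ ‖y‖ ≤ R} :=
    closure_minimal (fun y hy => ⟨hy.1.le, hy.2.le⟩)
      ((isClosed_le continuous_const continuous_norm).inter
        (isClosed_le continuous_norm continuous_const))
  have hxU : x ∈ U := ⟨hx, lt_max_of_lt_right (lt_add_one _)⟩
  refine (hw.mono fun y hy => hy.1).le_of_le_on_frontier ?_
    (hwc.mono fun y hy => (hclosure hy).1) ?_ (subset_closure hxU)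
  · exact (Metric.isBounded_ball (x := (0 : E)) (r := R)).subset fun y hy => by
      simpa using hy.2
  · intro y hy
    rw [hUopen.frontier_eq] at hy
    obtain ⟨hry, hyR⟩ := hclosure hy.1
    by_cases hyr : ‖y‖ = r
    · exact hsphere y hyr
    · have hyR' : ‖y‖ = R := by
        by_contra hne
        exact hy.2 ⟨lt_of_le_of_ne hry (Ne.symm hyr), lt_of_le_of_ne hyR hne⟩
      exact hM ‖y‖ (hyR' ▸ le_max_left _ _) y rfl

theorem HarmonicOnNhd.le_mul_sub_add_of_tendsto_div [Nontrivial E] {u v : E → ℝ}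
    {r a : ℝ} (hu : HarmonicOnNhd u {x | r < ‖x‖}) (hv : HarmonicOnNhd v {x | r < ‖x‖})
    (huc : ContinuousOn u {x | r ≤ ‖x‖}) (hvc : ContinuousOn v {x | r ≤ ‖x‖})
    (hvlim : Tendsto v (comap (‖·‖) atTop) atTop) (ha : 0 ≤ a)
    (hratio : Tendsto (fun x => u x / v x) (comap (‖·‖) atTop) (𝓝 a))
    {x : E} (hx : r ≤ ‖x‖) :
    u x ≤ a * v x - a * sInf {t | ∃ y : E, ‖y‖ = r ∧ t = v y}
      + sSup {t | ∃ y : E, ‖y‖ = r ∧ t = u y} := by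
  set mv := sInf {t | ∃ y : E, ‖y‖ = r ∧ t = v y}
  set Mu := sSup {t | ∃ y : E, ‖y‖ = r ∧ t = u y}
  have hsphere : Metric.sphere (0 : E) r ⊆ {x | r ≤ ‖x‖} := fun y hy => by simp_all
  have hslope : ∀ b > a, u x ≤ b * v x - b * mv + Mu := by
    intro b hab
    have hw : HarmonicOnNhd (b • v - u) {x | r < ‖x‖} := hv.const_smul.sub hu
    have hfar := (tendsto_mul_sub_atTop_of_tendsto_div hvlim hratio hab).eventually_ge_atTop
      (b * mv - Mu)
    have hbound :=
      hw.le_of_le_on_sphere_of_eventually_le ((hvc.const_smul b).sub huc) ?_ hfar hx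
    · simp only [Pi.sub_apply, Pi.smul_apply, smul_eq_mul] at hbound
      linarith
    · intro y hy
      have hvy := (csInf_le_and_le_csSup_of_norm_eq (hvc.mono hsphere) hy).1
      have huy := (csInf_le_and_le_csSup_of_norm_eq (huc.mono hsphere) hy).2
      simp only [Pi.sub_apply, Pi.smul_apply, smul_eq_mul]
      nlinarith
  have hlim :
      Tendsto (fun b => b * v x - b * mv + Mu) (𝓝[>] a) (𝓝 (a * v x - a * mv + Mu)) :=
    ((by fun_prop : Continuous fun b => b * v x - b * mv + Mu).tendsto a).mono_left
      nhdsWithin_le_nhds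
  exact ge_of_tendsto hlim (eventually_nhdsWithin_of_forall hslope)

end InnerProductSpace

theorem lap_eq_laplacian {n : ℕ} {u : EuclideanSpace ℝ (Fin n) → ℝ}
    {x : EuclideanSpace ℝ (Fin n)} (hu : ContDiffAt ℝ 2 u x) : lap n u x = Δ u x := by
  have hdu : DifferentiableAt ℝ (fderiv ℝ u) x :=
    (hu.fderiv_right (m := 1) le_rfl).differentiableAt one_ne_zero
  rw [laplacian_eq_iteratedFDeriv_orthonormalBasis u (EuclideanSpace.basisFun (Fin n) ℝ)]
  refine Finset.sum_congr rfl fun i _ => ?_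
  rw [fderiv_clm_apply hdu (differentiableAt_const _), iteratedFDeriv_two_apply]
  simp

theorem harmonicOnNhd_of_lap_eq_zero {n : ℕ} {u : EuclideanSpace ℝ (Fin n) → ℝ}
    {U : Set (EuclideanSpace ℝ (Fin n))} (hU : IsOpen U) (hu : ContDiffOn ℝ 2 u U)
    (hlap : ∀ x ∈ U, lap n u x = 0) : HarmonicOnNhd u U := fun x hx =>
  ⟨hu.contDiffAt (hU.mem_nhds hx), by
    filter_upwards [hU.mem_nhds hx] with y hy
    rw [← lap_eq_laplacian (hu.contDiffAt (hU.mem_nhds hy)), hlap y hy, Pi.zero_apply]⟩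

/-- if `u, v` are harmonic in the exterior domain, tend to `+∞` and
`u/v → a ∈ (0,∞)`, then `a·v − a·max_{∂B₁} v + min_{∂B₁} u ≤ u ≤ a·v − a·min_{∂B₁} v +
max_{∂B₁} u`; in particular `|u − a·v|` is bounded. -/
theorem stmt13 (n : ℕ) (hn : 3 ≤ n) (u v : EuclideanSpace ℝ (Fin n) → ℝ)
    (hucont : ContinuousOn u {x : EuclideanSpace ℝ (Fin n) | 1 ≤ ‖x‖})
    (hvcont : ContinuousOn v {x : EuclideanSpace ℝ (Fin n) | 1 ≤ ‖x‖})
    (hureg : ContDiffOn ℝ 2 u {x : EuclideanSpace ℝ (Fin n) | 1 < ‖x‖})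
    (hvreg : ContDiffOn ℝ 2 v {x : EuclideanSpace ℝ (Fin n) | 1 < ‖x‖})
    (huharm : ∀ x : EuclideanSpace ℝ (Fin n), 1 < ‖x‖ → lap n u x = 0)
    (hvharm : ∀ x : EuclideanSpace ℝ (Fin n), 1 < ‖x‖ → lap n v x = 0)
    (hulim : Filter.Tendsto u (Filter.comap (fun x : EuclideanSpace ℝ (Fin n) => ‖x‖)
      Filter.atTop) Filter.atTop)
    (hvlim : Filter.Tendsto v (Filter.comap (fun x : EuclideanSpace ℝ (Fin n) => ‖x‖)
      Filter.atTop) Filter.atTop)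
    (a : ℝ) (ha : 0 < a)
    (hratio : Filter.Tendsto (fun x => u x / v x)
      (Filter.comap (fun x : EuclideanSpace ℝ (Fin n) => ‖x‖) Filter.atTop) (nhds a)) :
    (∀ x : EuclideanSpace ℝ (Fin n), 1 ≤ ‖x‖ →
      a * v x - a * sSup {t : ℝ | ∃ y : EuclideanSpace ℝ (Fin n), ‖y‖ = 1 ∧ t = v y}
          + sInf {t : ℝ | ∃ y : EuclideanSpace ℝ (Fin n), ‖y‖ = 1 ∧ t = u y} ≤ u x ∧
      u x ≤ a * v x - a * sInf {t : ℝ | ∃ y : EuclideanSpace ℝ (Fin n), ‖y‖ = 1 ∧ t = v y}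
          + sSup {t : ℝ | ∃ y : EuclideanSpace ℝ (Fin n), ‖y‖ = 1 ∧ t = u y}) ∧
    ∃ C : ℝ, ∀ x : EuclideanSpace ℝ (Fin n), 1 ≤ ‖x‖ → |u x - a * v x| ≤ C := by
  have : Nonempty (Fin n) := ⟨⟨0, by omega⟩⟩
  have hext : IsOpen {x : EuclideanSpace ℝ (Fin n) | 1 < ‖x‖} :=
    isOpen_lt continuous_const continuous_norm
  have hu := harmonicOnNhd_of_lap_eq_zero hext hureg huharm
  have hv := harmonicOnNhd_of_lap_eq_zero hext hvreg hvharm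
  set mu := sInf {t : ℝ | ∃ y : EuclideanSpace ℝ (Fin n), ‖y‖ = 1 ∧ t = u y}
  set Mu := sSup {t : ℝ | ∃ y : EuclideanSpace ℝ (Fin n), ‖y‖ = 1 ∧ t = u y}
  set mv := sInf {t : ℝ | ∃ y : EuclideanSpace ℝ (Fin n), ‖y‖ = 1 ∧ t = v y}
  set Mv := sSup {t : ℝ | ∃ y : EuclideanSpace ℝ (Fin n), ‖y‖ = 1 ∧ t = v y}
  have upper x (hx : 1 ≤ ‖x‖) : u x ≤ a * v x - a * mv + Mu :=
    hu.le_mul_sub_add_of_tendsto_div hv hucont hvcont hvlim ha.le hratio hx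
  have lower x (hx : 1 ≤ ‖x‖) : a * v x - a * Mv + mu ≤ u x := by
    have hratio' : Tendsto (fun x => v x / u x) (comap (‖·‖) atTop) (𝓝 a⁻¹) := by
      simpa only [inv_div] using hratio.inv₀ ha.ne'
    have h := mul_le_mul_of_nonneg_left (hv.le_mul_sub_add_of_tendsto_div hu hvcont hucont
      hulim (inv_nonneg.2 ha.le) hratio' hx) ha.le
    field_simp at h
    linarith
  refine ⟨fun x hx => ⟨lower x hx, upper x hx⟩, max (Mu - a * mv) (a * Mv - mu),
    fun x hx => abs_le.2 ⟨?_, ?_⟩⟩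
  · linarith [lower x hx, le_max_right (Mu - a * mv) (a * Mv - mu)]
  · linarith [upper x hx, le_max_left (Mu - a * mv) (a * Mv - mu)]
end
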